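/- Let n and d be natural numbers and let X, Y : {1,…,n} → ℝ^d be two tuples of points in d-dimensional Euclidean space such that ‖X_i − X_j‖₂ = ‖Y_i − Y_j‖₂ for all i, j ∈ {1,…,n}. Then there exist a linear isometry Q of ℝ^d (i.e., an orthogonal linear map of Euclidean d-space onto itself) and a translation vector s ∈ ℝ^d such that Y_i = Q(X_i) + s for every i ∈ {1,…,n}. -/

import Mathlib

/-!
Translating both configurations so that a chosen point sits at the origin, the polarization
identity turns equal pairwise distances into equal Gram matrices. Two families with the same
Gram matrix are related by a linear isometry on the span of the first family: it is well
defined because `∑ aᵢ vᵢ` and `∑ aᵢ wᵢ` have the same norm. In finite dimension that isometry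
extends to an orthogonal map of the whole space.
-/

open scoped RealInnerProductSpace
open Finsupp

section GramMatrix

variable {ι E F : Type*} [NormedAddCommGroup E] [InnerProductSpace ℝ E]
  [NormedAddCommGroup F] [InnerProductSpace ℝ F] {v : ι → E} {w : ι → F}

theorem inner_linearCombination_eq_of_inner_eq (h : ∀ i j, ⟪v i, v j⟫ = ⟪w i, w j⟫)
    (a b : ι →₀ ℝ) :
    ⟪linearCombination ℝ v a, linearCombination ℝ v b⟫ =
      ⟪linearCombination ℝ w a, linearCombination ℝ w b⟫ := by
  simp [linearCombination_apply, Finsupp.sum_inner, Finsupp.inner_sum, real_inner_smul_left,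
    real_inner_smul_right, h]

theorem norm_linearCombination_eq_of_inner_eq (h : ∀ i j, ⟪v i, v j⟫ = ⟪w i, w j⟫)
    (a : ι →₀ ℝ) : ‖linearCombination ℝ v a‖ = ‖linearCombination ℝ w a‖ := by
  rw [norm_eq_sqrt_real_inner, norm_eq_sqrt_real_inner,
    inner_linearCombination_eq_of_inner_eq h]

theorem ker_linearCombination_le_of_inner_eq (h : ∀ i j, ⟪v i, v j⟫ = ⟪w i, w j⟫) :
    LinearMap.ker (linearCombination ℝ v) ≤ LinearMap.ker (linearCombination ℝ w) := by
  intro a ha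
  rw [LinearMap.mem_ker, ← norm_eq_zero, ← norm_linearCombination_eq_of_inner_eq h,
    LinearMap.mem_ker.mp ha, norm_zero]

noncomputable def LinearIsometry.ofInnerEq (h : ∀ i j, ⟪v i, v j⟫ = ⟪w i, w j⟫) :
    LinearMap.range (linearCombination ℝ v) →ₗᵢ[ℝ] F where
  toLinearMap :=
    (LinearMap.ker _).liftQ (linearCombination ℝ w) (ker_linearCombination_le_of_inner_eq h) ∘ₗ
      (linearCombination ℝ v).quotKerEquivRange.symm.toLinearMap
  norm_map' := by
    rintro ⟨x, hx⟩
    obtain ⟨a, rfl⟩ := LinearMap.mem_range.mp hx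
    simp [norm_linearCombination_eq_of_inner_eq h]

theorem LinearIsometry.ofInnerEq_apply (h : ∀ i j, ⟪v i, v j⟫ = ⟪w i, w j⟫) (a : ι →₀ ℝ) :
    LinearIsometry.ofInnerEq h ⟨linearCombination ℝ v a, LinearMap.mem_range_self _ a⟩ =
      linearCombination ℝ w a := by
  simp [LinearIsometry.ofInnerEq]

theorem exists_linearIsometryEquiv_of_inner_eq [FiniteDimensional ℝ E] {v w : ι → E}
    (h : ∀ i j, ⟪v i, v j⟫ = ⟪w i, w j⟫) :
    ∃ Q : E ≃ₗᵢ[ℝ] E, ∀ i, Q (v i) = w i := by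
  refine ⟨(LinearIsometry.ofInnerEq h).extend.toLinearIsometryEquiv rfl, fun i => ?_⟩
  have key := (LinearIsometry.ofInnerEq h).extend_apply
    ⟨_, LinearMap.mem_range_self _ (single i 1)⟩
  rw [LinearIsometry.ofInnerEq_apply] at key
  simpa using key

end GramMatrix

section Congruence

variable {ι E : Type*} [NormedAddCommGroup E] [InnerProductSpace ℝ E] {x y : ι → E}

theorem inner_sub_sub_eq_of_norm_sub_eq (h : ∀ i j, ‖x i - x j‖ = ‖y i - y j‖) (k i j : ι) :
    ⟪x i - x k, x j - x k⟫ = ⟪y i - y k, y j - y k⟫ := by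
  rw [real_inner_eq_norm_mul_self_add_norm_mul_self_sub_norm_sub_mul_self_div_two,
    real_inner_eq_norm_mul_self_add_norm_mul_self_sub_norm_sub_mul_self_div_two,
    sub_sub_sub_cancel_right, sub_sub_sub_cancel_right, h i k, h j k, h i j]

theorem exists_linearIsometryEquiv_add_of_norm_sub_eq [FiniteDimensional ℝ E]
    (h : ∀ i j, ‖x i - x j‖ = ‖y i - y j‖) :
    ∃ (Q : E ≃ₗᵢ[ℝ] E) (s : E), ∀ i, y i = Q (x i) + s := by
  rcases isEmpty_or_nonempty ι with _ | ⟨⟨k⟩⟩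
  · exact ⟨.refl ℝ E, 0, isEmptyElim⟩
  · obtain ⟨Q, hQ⟩ :=
      exists_linearIsometryEquiv_of_inner_eq (inner_sub_sub_eq_of_norm_sub_eq h k)
    refine ⟨Q, y k - Q (x k), fun i => ?_⟩
    rw [← sub_add_cancel (y i) (y k), ← hQ i, map_sub]
    abel

end Congruence

/-- Any two finite point configurations in Euclidean `d`-space with identical pairwise
Euclidean distances differ by a rigid motion: there is a linear isometry (orthogonal
transformation) `Q` of `ℝ^d` and a translation `s` with `Y i = Q (X i) + s` for all `i`. -/
theorem rigid_motion_of_equal_distances (n d : ℕ)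
    (X Y : Fin n → EuclideanSpace ℝ (Fin d))
    (h : ∀ i j : Fin n, ‖X i - X j‖ = ‖Y i - Y j‖) :
    ∃ (Q : EuclideanSpace ℝ (Fin d) ≃ₗᵢ[ℝ] EuclideanSpace ℝ (Fin d))
      (s : EuclideanSpace ℝ (Fin d)),
      ∀ i : Fin n, Y i = Q (X i) + s :=
  exists_linearIsometryEquiv_add_of_norm_sub_eq h
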